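/- For m ≥ 1, 0 ≤ k ≤ m, and τ ∈ ℤ^m, the symmetric Laurent polynomials R_τ satisfy the splitting identity R_τ(y_1,...,y_m) = Σ_{B ⊆ {1,...,m}, |B|=k} R_{(τ_1,...,τ_k)}(y_B) · R_{(τ_{k+1},...,τ_m)}(y_{B̄}) · ∏_{i∈B, j∈B̄} (q y_j − q^{−1} y_i)/(y_j − y_i). -/

import Mathlib

open Finset

noncomputable def Rpol {F : Type*} [Field F] (q : F) {m : ℕ}
    (τ : Fin m → ℤ) (y : Fin m → F) : F :=
  ∑ σ : Equiv.Perm (Fin m),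
    (∏ i : Fin m, y (σ i) ^ (τ i)) *
      ∏ i : Fin m, ∏ j ∈ Finset.univ.filter (fun j => i < j),
        ((q * y (σ j) - q⁻¹ * y (σ i)) / (y (σ j) - y (σ i)))

/-!
Every `σ ∈ S_{k+n}` factors uniquely as the shuffle attached to the `k`-set `B = σ {0, …, k-1}`
(listing `B` increasingly in the first `k` slots and `Bᶜ` increasingly in the last `n`) composed
with a pair `(π₁, π₂) ∈ S_k × S_n`. The summand of `R_τ` at `σ` splits along the first `k` and the
last `n` positions into the summands of the two smaller `R`'s at `π₁` and `π₂` times the cross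
product over pairs (first block, second block), which runs over `B × Bᶜ` whatever `π₁, π₂` are.
Summing over `π₁, π₂` and then over `B` gives the identity.
-/

open Equiv Fin

lemma Finset.prod_orderEmbOfFin {α M : Type*} [LinearOrder α] [CommMonoid M] (s : Finset α)
    {k : ℕ} (h : s.card = k) (f : α → M) : ∏ i, f (s.orderEmbOfFin h i) = ∏ x ∈ s, f x := by
  conv_rhs => rw [← s.map_orderEmbOfFin_univ h, prod_map]
  rfl

lemma Finset.card_compl_of_card_eq {k n m : ℕ} (hmn : k + n = m) {B : Finset (Fin m)}
    (hB : B.card = k) : Bᶜ.card = n := by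
  rw [card_compl, hB, Fintype.card_fin]
  omega

lemma Fin.prod_filter_lt_univ_add {M : Type*} [CommMonoid M] {k n : ℕ}
    (f : Fin (k + n) → Fin (k + n) → M) :
    ∏ i, ∏ j ∈ univ.filter (i < ·), f i j =
      (∏ i : Fin k, ∏ j ∈ univ.filter (i < ·), f (castAdd n i) (castAdd n j)) *
      (∏ i : Fin k, ∏ j : Fin n, f (castAdd n i) (natAdd k j)) *
      ∏ i : Fin n, ∏ j ∈ univ.filter (i < ·), f (natAdd k i) (natAdd k j) := by
  have cross (i : Fin k) (j : Fin n) : castAdd n i < natAdd k j := by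
    simp only [Fin.lt_def, val_castAdd, val_natAdd]
    omega
  have cross' (i : Fin k) (j : Fin n) : ¬ natAdd k j < castAdd n i := (cross i j).asymm
  simp only [prod_filter, prod_univ_add, prod_mul_distrib, cross, cross', if_true, if_false,
    prod_const_one, mul_one, (strictMono_castAdd n).lt_iff_lt, natAdd_lt_natAdd_iff, mul_assoc]

namespace Finset

variable {α : Type*} [Fintype α] [LinearOrder α] {k n : ℕ}

def shuffleEquiv (B : Finset α) (hB : B.card = k) (hC : Bᶜ.card = n) : Fin k ⊕ Fin n ≃ α :=
  ((B.orderIsoOfFin hB).toEquiv.sumCongr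
    ((Bᶜ.orderIsoOfFin hC).toEquiv.trans (subtypeEquivRight fun _ => mem_compl))).trans
    (sumCompl (· ∈ B))

@[simp]
lemma shuffleEquiv_inl (B : Finset α) (hB : B.card = k) (hC : Bᶜ.card = n) (i : Fin k) :
    B.shuffleEquiv hB hC (Sum.inl i) = B.orderEmbOfFin hB i := rfl

@[simp]
lemma shuffleEquiv_inr (B : Finset α) (hB : B.card = k) (hC : Bᶜ.card = n) (j : Fin n) :
    B.shuffleEquiv hB hC (Sum.inr j) = Bᶜ.orderEmbOfFin hC j := rfl

end Finset

section Shuffle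

variable {k n : ℕ}

def shufflePerm (B : Finset (Fin (k + n))) (hB : B.card = k) (π₁ : Perm (Fin k))
    (π₂ : Perm (Fin n)) : Perm (Fin (k + n)) :=
  finSumFinEquiv.symm.trans
    ((sumCongr π₁ π₂).trans (B.shuffleEquiv hB (card_compl_of_card_eq rfl hB)))

variable (B : Finset (Fin (k + n))) (hB : B.card = k) (π₁ : Perm (Fin k)) (π₂ : Perm (Fin n))

@[simp]
lemma shufflePerm_castAdd (i : Fin k) :
    shufflePerm B hB π₁ π₂ (castAdd n i) = B.orderEmbOfFin hB (π₁ i) := by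
  simp [shufflePerm]

@[simp]
lemma shufflePerm_natAdd (j : Fin n) :
    shufflePerm B hB π₁ π₂ (natAdd k j) =
      Bᶜ.orderEmbOfFin (card_compl_of_card_eq rfl hB) (π₂ j) := by
  simp [shufflePerm]

lemma image_shufflePerm_castAdd :
    univ.image (fun i => shufflePerm B hB π₁ π₂ (castAdd n i)) = B := by
  simp only [shufflePerm_castAdd]
  calc univ.image (fun i => B.orderEmbOfFin hB (π₁ i))
      = (univ.image π₁).image (B.orderEmbOfFin hB) := image_image.symm
    _ = B := by rw [image_univ_equiv, image_orderEmbOfFin_univ]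

lemma shufflePerm_injective :
    Function.Injective fun x : powersetCard k (univ : Finset (Fin (k + n))) ×
        Perm (Fin k) × Perm (Fin n) =>
      shufflePerm x.1 (mem_powersetCard.1 x.1.2).2 x.2.1 x.2.2 := by
  rintro ⟨⟨B, hB⟩, π₁, π₂⟩ ⟨⟨B', hB'⟩, π₁', π₂'⟩ h
  have hBB : B = B' := by
    rw [← image_shufflePerm_castAdd B (mem_powersetCard.1 hB).2 π₁ π₂,
      ← image_shufflePerm_castAdd B' (mem_powersetCard.1 hB').2 π₁' π₂']
    simp only at h
    rw [h]
  subst hBB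
  have h₁ : π₁ = π₁' := Equiv.ext fun i => by simpa using congr($h (castAdd n i))
  have h₂ : π₂ = π₂' := Equiv.ext fun j => by simpa using congr($h (natAdd k j))
  rw [h₁, h₂]

lemma sum_perm_eq_sum_powersetCard {M : Type*} [AddCommMonoid M] (g : Perm (Fin (k + n)) → M) :
    ∑ σ, g σ = ∑ B ∈ powersetCard k univ, if hB : B.card = k then
      ∑ π₁ : Perm (Fin k), ∑ π₂ : Perm (Fin n), g (shufflePerm B hB π₁ π₂) else 0 := by
  have hbij := (Fintype.bijective_iff_injective_and_card _).2 ⟨shufflePerm_injective, by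
    simp only [Fintype.card_prod, Fintype.card_coe, card_powersetCard, card_univ,
      Fintype.card_fin, Fintype.card_perm, ← mul_assoc]
    simpa using Nat.choose_mul_factorial_mul_factorial (Nat.le_add_right k n)⟩
  rw [← Fintype.sum_bijective _ hbij _ g fun _ => rfl, Fintype.sum_prod_type,
    sum_dite_of_true fun B hB => (mem_powersetCard.1 hB).2]
  simp only [Fintype.sum_prod_type]

end Shuffle

section Rpol

variable {F : Type*} [Field F] (q : F)

noncomputable def rpolTerm {m : ℕ} (τ : Fin m → ℤ) (z : Fin m → F) : F :=
  (∏ i, z i ^ τ i) * ∏ i, ∏ j ∈ univ.filter (i < ·), (q * z j - q⁻¹ * z i) / (z j - z i)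

lemma Rpol_eq_sum_rpolTerm {m : ℕ} (τ : Fin m → ℤ) (y : Fin m → F) :
    Rpol q τ y = ∑ σ : Perm (Fin m), rpolTerm q τ (y ∘ σ) := rfl

variable {k n : ℕ}

lemma rpolTerm_append (τ : Fin (k + n) → ℤ) (z : Fin (k + n) → F) :
    rpolTerm q τ z = rpolTerm q (τ ∘ castAdd n) (z ∘ castAdd n) *
      rpolTerm q (τ ∘ natAdd k) (z ∘ natAdd k) *
      ∏ i : Fin k, ∏ j : Fin n, (q * z (natAdd k j) - q⁻¹ * z (castAdd n i)) /
        (z (natAdd k j) - z (castAdd n i)) := by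
  rw [rpolTerm, prod_filter_lt_univ_add, prod_univ_add]
  simp only [rpolTerm, Function.comp_apply]
  ring

lemma rpolTerm_comp_shufflePerm (B : Finset (Fin (k + n))) (hB : B.card = k)
    (π₁ : Perm (Fin k)) (π₂ : Perm (Fin n)) (τ : Fin (k + n) → ℤ) (y : Fin (k + n) → F) :
    rpolTerm q τ (y ∘ shufflePerm B hB π₁ π₂) =
      rpolTerm q (τ ∘ castAdd n) ((y ∘ B.orderEmbOfFin hB) ∘ π₁) *
      rpolTerm q (τ ∘ natAdd k) ((y ∘ Bᶜ.orderEmbOfFin (card_compl_of_card_eq rfl hB)) ∘ π₂) *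
      ∏ a ∈ B, ∏ b ∈ Bᶜ, (q * y b - q⁻¹ * y a) / (y b - y a) := by
  rw [rpolTerm_append]
  congr 1
  · congr 2 <;> ext <;> simp
  · simp only [Function.comp_apply, shufflePerm_castAdd, shufflePerm_natAdd]
    symm
    rw [← prod_orderEmbOfFin B hB, ← Equiv.prod_comp π₁]
    refine prod_congr rfl fun i _ => ?_
    rw [← prod_orderEmbOfFin Bᶜ (card_compl_of_card_eq rfl hB), ← Equiv.prod_comp π₂]

theorem Rpol_eq_sum_powersetCard {m : ℕ} (hmn : k + n = m) (τ : Fin m → ℤ) (y : Fin m → F) :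
    Rpol q τ y = ∑ B ∈ powersetCard k univ, if hB : B.card = k then
      Rpol q (fun i => τ (Fin.cast hmn (castAdd n i))) (fun i => y (B.orderEmbOfFin hB i)) *
      Rpol q (fun j => τ (Fin.cast hmn (natAdd k j)))
        (fun j => y (Bᶜ.orderEmbOfFin (card_compl_of_card_eq hmn hB) j)) *
      ∏ a ∈ B, ∏ b ∈ Bᶜ, (q * y b - q⁻¹ * y a) / (y b - y a)
    else 0 := by
  subst hmn
  rw [Rpol_eq_sum_rpolTerm, sum_perm_eq_sum_powersetCard]
  refine sum_congr rfl fun B _ => dite_congr rfl (fun hB => ?_) fun _ => rfl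
  simp only [rpolTerm_comp_shufflePerm]
  rw [Rpol_eq_sum_rpolTerm, Rpol_eq_sum_rpolTerm, sum_mul_sum, sum_mul]
  simp only [sum_mul]
  rfl

end Rpol

/-- the splitting identity
`R_τ(y) = Σ_{|B|=k} R_{(τ₁,…,τ_k)}(y_B) R_{(τ_{k+1},…,τ_m)}(y_{B̄})
∏_{i∈B, j∈B̄} (q y_j − q⁻¹ y_i)/(y_j − y_i)`. -/
theorem Rpol_splitting {F : Type*} [Field F] (q : F)
    (m k : ℕ) (hk : k ≤ m) (τ : Fin m → ℤ)
    (y : Fin m → F) :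
    Rpol q τ y = ∑ B ∈ Finset.powersetCard k (Finset.univ : Finset (Fin m)),
      if h : B.card = k then
        Rpol q (fun i : Fin k => τ (Fin.castLE hk i))
            (fun i => y (B.orderEmbOfFin h i))
        * Rpol q (fun i : Fin (m - k) => τ ⟨k + (i : ℕ), by have := i.isLt; omega⟩)
            (fun i => y (Bᶜ.orderEmbOfFin (by simp [Finset.card_compl, h]) i))
        * ∏ i ∈ B, ∏ j ∈ Bᶜ, ((q * y j - q⁻¹ * y i) / (y j - y i))
      else 0 :=
  Rpol_eq_sum_powersetCard q (Nat.add_sub_cancel' hk) τ y
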